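/- Let g : (0,∞) → (0,∞) be strictly decreasing, let β > 0, and define f(s) := sign(sin s)·|sin s|^β. Then for all x > 0, ∫_0^x g(s) f(s) ds > 0 (assuming the integral converges at 0). -/
import Mathlib

open Set

private lemma fsin_anti (β s : ℝ) :
    Real.sign (Real.sin (s + Real.pi)) * |Real.sin (s + Real.pi)| ^ β
      = -(Real.sign (Real.sin s) * |Real.sin s| ^ β) := by
  rw [Real.sin_add_pi, Real.sign_neg, abs_neg]; ring

private lemma fsin_nonneg {β s : ℝ} (h : 0 ≤ Real.sin s) :
    0 ≤ Real.sign (Real.sin s) * |Real.sin s| ^ β := by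
  rcases h.eq_or_lt with h0 | h0
  · simp [← h0]
  · rw [Real.sign_of_pos h0, one_mul]
    exact Real.rpow_nonneg (abs_nonneg _) _

private lemma fsin_pos {β s : ℝ} (h : 0 < Real.sin s) :
    0 < Real.sign (Real.sin s) * |Real.sin s| ^ β := by
  rw [Real.sign_of_pos h, one_mul]
  exact Real.rpow_pos_of_pos (abs_pos.mpr h.ne') _

private lemma sin_pos_shift {k : ℕ} {s : ℝ}
    (h1 : 2 * Real.pi * k < s) (h2 : s < 2 * Real.pi * k + Real.pi) :
    0 < Real.sin s := by
  have : Real.sin s = Real.sin (s - 2 * Real.pi * k) := by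
    have := Real.sin_add_int_mul_two_pi (s - 2 * Real.pi * k) (k : ℤ)
    rw [← this]; push_cast; ring_nf
  rw [this]
  exact Real.sin_pos_of_pos_of_lt_pi (by linarith) (by linarith)

private lemma sin_nonneg_shift {k : ℕ} {s : ℝ}
    (h1 : 2 * Real.pi * k ≤ s) (h2 : s ≤ 2 * Real.pi * k + Real.pi) :
    0 ≤ Real.sin s := by
  have : Real.sin s = Real.sin (s - 2 * Real.pi * k) := by
    have := Real.sin_add_int_mul_two_pi (s - 2 * Real.pi * k) (k : ℤ)
    rw [← this]; push_cast; ring_nf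
  rw [this]
  exact Real.sin_nonneg_of_nonneg_of_le_pi (by linarith) (by linarith)

private lemma core (g : ℝ → ℝ) (hganti : StrictAntiOn g (Ioi 0))
    (hgpos : ∀ s ∈ Ioi (0:ℝ), 0 < g s) (β : ℝ) (k : ℕ) (x : ℝ)
    (h1 : 2 * Real.pi * k < x) (h2 : x ≤ 2 * Real.pi * k + 2 * Real.pi)
    (hi : IntervalIntegrable
        (fun s => g s * (Real.sign (Real.sin s) * |Real.sin s| ^ β))
        MeasureTheory.volume (2 * Real.pi * k) x) :
    0 < ∫ s in (2 * Real.pi * k)..x,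
          g s * (Real.sign (Real.sin s) * |Real.sin s| ^ β) := by
  have hπ := Real.pi_pos
  set a : ℝ := 2 * Real.pi * k with ha
  have ha0 : 0 ≤ a := by positivity
  set φ : ℝ → ℝ := fun s => g s * (Real.sign (Real.sin s) * |Real.sin s| ^ β) with hφ
  have mono : ∀ c d : ℝ, a ≤ c → c ≤ d → d ≤ x →
      IntervalIntegrable φ MeasureTheory.volume c d := by
    intro c d hc hcd hd
    refine hi.mono_set ?_
    rw [Set.uIcc_of_le hcd, Set.uIcc_of_le (le_trans hc (hcd.trans hd))]
    exact Set.Icc_subset_Icc hc hd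
  rcases le_or_gt x (a + Real.pi) with hx | hx
  · -- x ≤ a + π : integrand positive on (a, x)
    refine intervalIntegral.intervalIntegral_pos_of_pos_on hi ?_ h1
    intro s hs
    have hsin : 0 < Real.sin s := sin_pos_shift hs.1 (lt_of_lt_of_le hs.2 hx)
    exact mul_pos (hgpos s (lt_of_le_of_lt ha0 hs.1)) (fsin_pos hsin)
  · -- a + π < x ≤ a + 2π
    have hord1 : a ≤ x - Real.pi := by linarith
    have hord2 : x - Real.pi ≤ a + Real.pi := by linarith
    have hord3 : a + Real.pi ≤ x := by linarith
    have i1 := mono a (x - Real.pi) le_rfl hord1 (by linarith)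
    have i2 := mono (x - Real.pi) (a + Real.pi) hord1 hord2 hord3
    have i3 := mono (a + Real.pi) x (by linarith) hord3 le_rfl
    have i5 := mono a (a + Real.pi) le_rfl (by linarith) hord3
    have i4 : IntervalIntegrable (fun s => φ (s + Real.pi))
        MeasureTheory.volume a (x - Real.pi) := by
      have := i3.comp_add_right Real.pi
      simpa using this
    have split1 : ∫ s in a..x, φ s
        = (∫ s in a..(x - Real.pi), φ s) + (∫ s in (x - Real.pi)..(a + Real.pi), φ s)
          + ∫ s in (a + Real.pi)..x, φ s := by
      rw [intervalIntegral.integral_add_adjacent_intervals i1 i2,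
        intervalIntegral.integral_add_adjacent_intervals i5 i3]
    have key3 : ∫ s in (a + Real.pi)..x, φ s
        = ∫ s in a..(x - Real.pi), φ (s + Real.pi) := by
      rw [intervalIntegral.integral_comp_add_right φ Real.pi, sub_add_cancel]
    have paired : 0 < ∫ s in a..(x - Real.pi), (φ s + φ (s + Real.pi)) := by
      refine intervalIntegral.intervalIntegral_pos_of_pos_on (i1.add i4) ?_ (by linarith)
      intro s hs
      have hs0 : 0 < s := lt_of_le_of_lt ha0 hs.1
      have hsin : 0 < Real.sin s := sin_pos_shift hs.1 (by linarith [hs.2])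
      have hgs : g (s + Real.pi) < g s :=
        hganti (Set.mem_Ioi.mpr hs0) (Set.mem_Ioi.mpr (by linarith)) (by linarith)
      have : φ s + φ (s + Real.pi)
          = (g s - g (s + Real.pi)) * (Real.sign (Real.sin s) * |Real.sin s| ^ β) := by
        simp only [hφ, fsin_anti β s]; ring
      rw [this]
      exact mul_pos (by linarith) (fsin_pos hsin)
    have mid : 0 ≤ ∫ s in (x - Real.pi)..(a + Real.pi), φ s := by
      refine intervalIntegral.integral_nonneg hord2 ?_
      intro s hs
      have hsin : 0 ≤ Real.sin s := sin_nonneg_shift (le_trans hord1 hs.1) hs.2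
      exact mul_nonneg (hgpos s (lt_of_le_of_lt ha0 (lt_of_lt_of_le (by linarith) hs.1))).le
        (fsin_nonneg hsin)
    have sum_eq : ∫ s in a..(x - Real.pi), (φ s + φ (s + Real.pi))
        = (∫ s in a..(x - Real.pi), φ s) + ∫ s in a..(x - Real.pi), φ (s + Real.pi) :=
      intervalIntegral.integral_add i1 i4
    rw [split1, key3]
    rw [sum_eq] at paired
    linarith

/-- Let `g : (0,∞) → (0,∞)` be strictly decreasing, `β > 0` and
`f(s) := sign(sin s)·|sin s|^β`.  Then, assuming the integrals converge,
`∫_0^x g(s) f(s) ds > 0` for every `x > 0`. -/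
theorem stmt5 (g : ℝ → ℝ) (hganti : StrictAntiOn g (Ioi 0))
    (hgpos : ∀ s ∈ Ioi (0:ℝ), 0 < g s) (β : ℝ) (hβ : 0 < β)
    (hint : ∀ x : ℝ, 0 < x →
      IntervalIntegrable
        (fun s => g s * (Real.sign (Real.sin s) * |Real.sin s| ^ β))
        MeasureTheory.volume 0 x) :
    ∀ x : ℝ, 0 < x →
      0 < ∫ s in (0:ℝ)..x,
            g s * (Real.sign (Real.sin s) * |Real.sin s| ^ β) := by
  have hπ := Real.pi_pos
  set φ : ℝ → ℝ := fun s => g s * (Real.sign (Real.sin s) * |Real.sin s| ^ β) with hφ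
  have mono : ∀ c d X : ℝ, 0 < X → 0 ≤ c → c ≤ d → d ≤ X →
      IntervalIntegrable φ MeasureTheory.volume c d := by
    intro c d X hX hc hcd hd
    refine (hint X hX).mono_set ?_
    rw [Set.uIcc_of_le hcd, Set.uIcc_of_le (le_trans hc (hcd.trans hd))]
    exact Set.Icc_subset_Icc hc hd
  have F0 : ∀ n : ℕ, 0 ≤ ∫ s in (0:ℝ)..(2 * Real.pi * n), φ s := by
    intro n
    induction n with
    | zero => simp
    | succ n ih =>
      have hn1 : (0:ℝ) < 2 * Real.pi * (n + 1) := by positivity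
      have hle : (2:ℝ) * Real.pi * n ≤ 2 * Real.pi * (n + 1) := by
        push_cast; nlinarith
      have j1 := mono 0 (2 * Real.pi * n) (2 * Real.pi * (n + 1)) hn1
        le_rfl (by positivity) hle
      have j2 := mono (2 * Real.pi * n) (2 * Real.pi * (n + 1)) (2 * Real.pi * (n + 1))
        hn1 (by positivity) hle le_rfl
      have hcore := core g hganti hgpos β n (2 * Real.pi * ((n:ℝ) + 1))
        (by nlinarith) (by ring_nf; rfl)
        (by convert j2 using 2)
      rw [show ((n+1:ℕ):ℝ) = (n:ℝ)+1 by push_cast; ring,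
        ← intervalIntegral.integral_add_adjacent_intervals j1
          (by convert j2 using 2 : IntervalIntegrable φ MeasureTheory.volume (2*Real.pi*(n:ℝ)) (2*Real.pi*((n:ℝ)+1)))]
      linarith
  intro x hx
  -- find n with 2πn < x ≤ 2π(n+1)
  obtain ⟨n, hn1, hn2⟩ : ∃ n : ℕ, 2 * Real.pi * n < x ∧ x ≤ 2 * Real.pi * n + 2 * Real.pi := by
    set m := ⌈x / (2 * Real.pi)⌉₊ with hm
    have hm1 : 1 ≤ m := Nat.one_le_ceil_iff.mpr (by positivity)
    refine ⟨m - 1, ?_, ?_⟩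
    · have : ((m - 1 : ℕ) : ℝ) < x / (2 * Real.pi) := by
        rw [← Nat.lt_ceil]; omega
      calc 2 * Real.pi * ((m - 1 : ℕ) : ℝ) < 2 * Real.pi * (x / (2 * Real.pi)) := by
            apply mul_lt_mul_of_pos_left this (by positivity)
        _ = x := by field_simp
    · have h1 : x / (2 * Real.pi) ≤ (m : ℝ) := Nat.le_ceil _
      have h2 : x ≤ 2 * Real.pi * m := by
        calc x = 2 * Real.pi * (x / (2 * Real.pi)) := by field_simp
          _ ≤ 2 * Real.pi * m := by
            apply mul_le_mul_of_nonneg_left h1 (by positivity)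
      have : ((m - 1 : ℕ) : ℝ) = (m : ℝ) - 1 := by
        push_cast [Nat.cast_sub hm1]; ring
      rw [this]; linarith
  have j1 := mono 0 (2 * Real.pi * n) x hx le_rfl (by positivity) hn1.le
  have j2 := mono (2 * Real.pi * n) x x hx (by positivity) hn1.le le_rfl
  have hcore := core g hganti hgpos β n x hn1 hn2 j2
  rw [← intervalIntegral.integral_add_adjacent_intervals j1 j2]
  linarith [F0 n]
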